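/- Let n ≥ 1 and let t denote the variable X of the polynomial ring ℤ[t]. Let A'_n and B'_n be the n×n matrices over ℤ[t] with entries (A'_n)_{ij} = −2 if i ≤ j and −3 if i > j, and (B'_n)_{ij} = −3 if i ≤ j and −2 if i > j. Then det(A'_n − t·B'_nᵀ) = 3tⁿ − 2 in ℤ[t]. -/

import Mathlib

/-!
`A'ₙ − t·B'ₙᵀ` has the constant entries `2t − 2` above the diagonal, `3t − 2` on it and
`3t − 3` below it. Adding the same constant `s` to every entry is a rank-one update, so the
determinant is affine in `s`; for `s = −(2t − 2)` and `s = −(3t − 3)` the matrix becomes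
triangular with determinant `tⁿ` and `1` respectively. Interpolating gives
`(t − 1) · det = (3t − 3) tⁿ − (2t − 2)`, and `t − 1` cancels in the domain `ℤ[t]`.
-/

open Polynomial Matrix

namespace Matrix

variable {ι R : Type*} [CommRing R]

theorem exists_det_add_smul_vecMulVec_eq [Fintype ι] [DecidableEq ι] (M : Matrix ι ι R)
    (u w : ι → R) {k : ι} (hk : u k = 1) :
    ∃ c, ∀ t : R, (M + t • vecMulVec u w).det = M.det + t * c := by
  -- `E` subtracts `u i` times row `k` from each row `i ≠ k`; it turns the rank-one update
  -- into an update of row `k` alone, in which the determinant is linear.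
  set E : Matrix ι ι R := 1 + vecMulVec (Pi.single k 1 - u) (Pi.single k 1) with hEdef
  have hE : E.det = 1 := by
    rw [hEdef, vecMulVec_eq Unit, det_one_add_replicateCol_mul_replicateRow, dotProduct_sub,
      single_dotProduct, single_dotProduct, hk]
    simp
  have hEu : E *ᵥ u = Pi.single k 1 := by
    simp [E, add_mulVec, vecMulVec_mulVec, hk]
  have hrow : ∀ t : R,
      E * (M + t • vecMulVec u w) = updateRow (E * M) k ((E * M) k + t • w) := by
    intro t
    ext i j
    rw [Matrix.mul_add, Matrix.mul_smul, mul_vecMulVec, hEu]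
    rcases eq_or_ne i k with rfl | hi
    · simp [vecMulVec_apply]
    · simp [updateRow_apply, vecMulVec_apply, hi]
  refine ⟨(updateRow (E * M) k w).det, fun t => ?_⟩
  calc (M + t • vecMulVec u w).det = (E * (M + t • vecMulVec u w)).det := by
        rw [det_mul, hE, one_mul]
    _ = (E * M).det + t * (updateRow (E * M) k w).det := by
        rw [hrow, det_updateRow_add, det_updateRow_smul, updateRow_eq_self]
    _ = M.det + t * (updateRow (E * M) k w).det := by rw [det_mul, hE, one_mul]

section UpperDiagLower

variable [LinearOrder ι]

def upperDiagLower (a d b : R) : Matrix ι ι R :=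
  of fun i j => if i < j then a else if i = j then d else b

theorem upperDiagLower_add_smul_vecMulVec_one (a d b t : R) :
    upperDiagLower a d b + t • vecMulVec 1 1 =
      (upperDiagLower (a + t) (d + t) (b + t) : Matrix ι ι R) := by
  ext i j
  simp only [upperDiagLower, add_apply, smul_apply, vecMulVec_apply, of_apply]
  split_ifs <;> simp

variable [Fintype ι]

theorem det_upperDiagLower_zero_left (d b : R) :
    (upperDiagLower 0 d b : Matrix ι ι R).det = d ^ Fintype.card ι := by
  rw [det_of_isLowerTriangular _ fun i j (h : i < j) => by simp [upperDiagLower, h]]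
  simp [upperDiagLower]

theorem det_upperDiagLower_zero_right (a d : R) :
    (upperDiagLower a d 0 : Matrix ι ι R).det = d ^ Fintype.card ι := by
  rw [det_of_isUpperTriangular fun i j (h : j < i) => by simp [upperDiagLower, h.not_gt, h.ne']]
  simp [upperDiagLower]

theorem sub_mul_det_upperDiagLower (a d b : R) :
    (b - a) * (upperDiagLower a d b : Matrix ι ι R).det =
      b * (d - a) ^ Fintype.card ι - a * (d - b) ^ Fintype.card ι := by
  cases isEmpty_or_nonempty ι
  · simp
  obtain ⟨c, hc⟩ := exists_det_add_smul_vecMulVec_eq (upperDiagLower a d b : Matrix ι ι R) 1 1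
    (k := Classical.arbitrary ι) rfl
  have ha := hc (-a)
  have hb := hc (-b)
  rw [upperDiagLower_add_smul_vecMulVec_one, add_neg_cancel, ← sub_eq_add_neg,
    det_upperDiagLower_zero_left] at ha
  rw [upperDiagLower_add_smul_vecMulVec_one, add_neg_cancel, ← sub_eq_add_neg, ← sub_eq_add_neg,
    det_upperDiagLower_zero_right] at hb
  linear_combination a * hb - b * ha

end UpperDiagLower

end Matrix

theorem det_A'_sub_tB't_general (n : ℕ)
    (A B : Matrix (Fin n) (Fin n) (Polynomial ℤ))
    (hA : ∀ i j, A i j = if i ≤ j then -2 else -3)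
    (hB : ∀ i j, B i j = if i ≤ j then -3 else -2) :
    (A - (X : Polynomial ℤ) • B.transpose).det = 3 * X ^ n - 2 := by
  have hM : A - (X : Polynomial ℤ) • B.transpose =
      upperDiagLower (2 * X - 2) (3 * X - 2) (3 * X - 3) := by
    ext i j : 1
    rw [upperDiagLower, of_apply, Matrix.sub_apply, Matrix.smul_apply, transpose_apply, hA, hB,
      smul_eq_mul]
    split_ifs <;> first | order | ring
  have key := sub_mul_det_upperDiagLower (ι := Fin n) (2 * X - 2 : ℤ[X]) (3 * X - 2) (3 * X - 3)
  rw [Fintype.card_fin, ← hM] at key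
  have hX : (X - 1 : ℤ[X]) ≠ 0 := by simpa using X_sub_C_ne_zero (1 : ℤ)
  exact mul_left_cancel₀ hX (by linear_combination key)

/-- `det (A'ₙ − t·B'ₙᵀ) = 3tⁿ − 2` for the Seifert-matrix blocks of `K'_{n,m}`. -/
theorem det_A'_sub_tB't (n : ℕ) (hn : 1 ≤ n)
    (A B : Matrix (Fin n) (Fin n) (Polynomial ℤ))
    (hA : ∀ i j, A i j = if i ≤ j then -2 else -3)
    (hB : ∀ i j, B i j = if i ≤ j then -3 else -2) :
    (A - (X : Polynomial ℤ) • B.transpose).det = 3 * X ^ n - 2 :=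
  det_A'_sub_tB't_general n A B hA hB
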